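/- (Stable upper genus of PSL(2,𝔽₇) is 399.) (a) There do not exist natural numbers h, a₂, a₃, a₄, a₇ such that, as integers, 398 = 1 + 168(h−1) + 42a₂ + 56a₃ + 63a₄ + 72a₇ (equivalently, 168h + 42a₂ + 56a₃ + 63a₄ + 72a₇ = 565 has no solution in natural numbers); consequently PSL(2,𝔽₇) admits no generating vector realizing genus 398. (b) For every integer g ≥ 399 there exist natural numbers h, a₂, a₃, a₄, a₇ with (h, a₂, a₃, a₄, a₇) ≠ (1, 1, 0, 0, 0) such that g = 1 + 168(h−1) + 42a₂ + 56a₃ + 63a₄ + 72a₇; consequently, by the classification of signatures, PSL(2,𝔽₇) admits a generating vector of type (h; 2^[a₂],3^[a₃],4^[a₄],7^[a₇]) realizing genus g. -/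

import Mathlib

open scoped commutatorElement in
/-- `GenVector G h periods` says that the group `G` admits a generating vector of type
`(h; periods)`. -/
def GenVector (G : Type) [Group G] (h : ℕ) (periods : List ℕ) : Prop :=
  ∃ (α β : Fin h → G) (c : Fin periods.length → G),
    (∀ j, orderOf (c j) = periods.get j) ∧
    ((List.ofFn fun i => ⁅α i, β i⁆).prod * (List.ofFn c).prod = 1) ∧
    Subgroup.closure (Set.range α ∪ Set.range β ∪ Set.range c) = ⊤

/-- The period list `2^[a₂], 3^[a₃], 4^[a₄], 7^[a₇]`. -/
def periods7 (a₂ a₃ a₄ a₇ : ℕ) : List ℕ :=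
  List.replicate a₂ 2 ++ List.replicate a₃ 3 ++ List.replicate a₄ 4 ++ List.replicate a₇ 7

/-!
Every genus `g ≥ 399` is realized by a spherical signature (`h = 0`). The generating vectors are
obtained from five explicit ones, of types `(3, 7, 7)`, `(4, 7, 7)`, `(3, 4, 7)`, `(7, 7, 7)` and
`(2, 2, 3, 3)`, by appending lists with product one: pairs `(u, u⁻¹)` and fixed relations of
types `(2, 3, 4)` and `(2, 7, 7, 7)`. Braid moves sort the periods, and generation is checked by
exhibiting elements of orders `3`, `4` and `7`, which force index at most two in the simple group
`PSL(2, 𝔽₇)` of order `168`. The weights `84 a + 112 b + 126 c + 144 d` of the pairs are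
described by congruences modulo `3`, `4` and `7`, so covering all genera `g ≥ 399` is a finite
check over one period of `84`. The same congruences exclude genus `398`.
-/

open scoped commutatorElement MatrixGroups

section Lists

variable {G : Type*} [Group G]

def HasOrders (L : List G) (P : List ℕ) : Prop :=
  List.Forall₂ (fun g n => orderOf g = n) L P

instance [∀ (g : G) (n : ℕ), Decidable (orderOf g = n)] (L : List G) (P : List ℕ) :
    Decidable (HasOrders L P) :=
  inferInstanceAs (Decidable (List.Forall₂ _ L P))

variable (G) in
def IsProdOneType (P : List ℕ) : Prop :=
  ∃ L : List G, HasOrders L P ∧ L.prod = 1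

omit [Group G] in
theorem setOf_mem_ofFn {n : ℕ} (f : Fin n → G) : {g | g ∈ List.ofFn f} = Set.range f :=
  Set.ext (List.mem_ofFn' f)

omit [Group G] in
theorem setOf_mem_cons (a : G) (L : List G) : {g | g ∈ a :: L} = insert a {g | g ∈ L} := by
  ext; simp

theorem closure_insert_conj (u v : G) (s : Set G) :
    Subgroup.closure (insert (u * v * u⁻¹) (insert u s)) =
      Subgroup.closure (insert u (insert v s)) := by
  have hu₁ : u ∈ Subgroup.closure (insert (u * v * u⁻¹) (insert u s)) :=
    Subgroup.subset_closure (by simp)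
  have hc₁ : u * v * u⁻¹ ∈ Subgroup.closure (insert (u * v * u⁻¹) (insert u s)) :=
    Subgroup.subset_closure (by simp)
  have hu₂ : u ∈ Subgroup.closure (insert u (insert v s)) := Subgroup.subset_closure (by simp)
  have hv₂ : v ∈ Subgroup.closure (insert u (insert v s)) := Subgroup.subset_closure (by simp)
  apply le_antisymm <;> simp only [Subgroup.closure_le, Set.insert_subset_iff]
  · exact ⟨mul_mem (mul_mem hu₂ hv₂) (inv_mem hu₂), hu₂,
      fun g hg => Subgroup.subset_closure (by simp [hg])⟩
  · exact ⟨hu₁, by simpa [mul_assoc] using mul_mem (mul_mem (inv_mem hu₁) hc₁) hu₁,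
      fun g hg => Subgroup.subset_closure (by simp [hg])⟩

/-- Any reordering of the orders is realized by braid moves `(u, v) ↦ (u v u⁻¹, u)`. -/
theorem HasOrders.exists_perm {L : List G} {P Q : List ℕ} (hL : HasOrders L P) (hPQ : P.Perm Q) :
    ∃ L' : List G, HasOrders L' Q ∧ L'.prod = L.prod ∧
      Subgroup.closure {g | g ∈ L'} = Subgroup.closure {g | g ∈ L} := by
  induction hPQ generalizing L with
  | nil => exact ⟨L, hL, rfl, rfl⟩
  | cons n _ ih =>
    obtain ⟨x, L₁, hx, hL₁, rfl⟩ := List.forall₂_cons_right_iff.mp hL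
    obtain ⟨L', hL', hprod, hcl⟩ := ih hL₁
    refine ⟨x :: L', .cons hx hL', by simp [hprod], ?_⟩
    rw [setOf_mem_cons, setOf_mem_cons, ← Set.singleton_union, ← Set.singleton_union,
      Subgroup.closure_union, Subgroup.closure_union, hcl]
  | swap m n P =>
    obtain ⟨u, L₁, hu, hL₁, rfl⟩ := List.forall₂_cons_right_iff.mp hL
    obtain ⟨v, L₂, hv, hL₂, rfl⟩ := List.forall₂_cons_right_iff.mp hL₁
    have hconj : orderOf (u * v * u⁻¹) = orderOf v :=
      (SemiconjBy.orderOf_eq u (by simp [SemiconjBy] : SemiconjBy u v (u * v * u⁻¹))).symm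
    refine ⟨u * v * u⁻¹ :: u :: L₂, .cons (hconj.trans hv) (.cons hu hL₂), by simp [mul_assoc], ?_⟩
    simp only [setOf_mem_cons, closure_insert_conj]
  | trans _ _ ih₁ ih₂ =>
    obtain ⟨L₁, hL₁, hprod₁, hcl₁⟩ := ih₁ hL
    obtain ⟨L₂, hL₂, hprod₂, hcl₂⟩ := ih₂ hL₁
    exact ⟨L₂, hL₂, hprod₂.trans hprod₁, hcl₂.trans hcl₁⟩

theorem IsProdOneType.perm {P Q : List ℕ} (hP : IsProdOneType G P) (hPQ : P.Perm Q) :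
    IsProdOneType G Q := by
  obtain ⟨L, hL, hprod⟩ := hP
  obtain ⟨L', hL', hprod', -⟩ := hL.exists_perm hPQ
  exact ⟨L', hL', hprod'.trans hprod⟩

theorem IsProdOneType.append {P Q : List ℕ} (hP : IsProdOneType G P) (hQ : IsProdOneType G Q) :
    IsProdOneType G (P ++ Q) := by
  obtain ⟨L, hL, hLprod⟩ := hP
  obtain ⟨M, hM, hMprod⟩ := hQ
  exact ⟨L ++ M, List.rel_append hL hM, by simp [hLprod, hMprod]⟩

theorem isProdOneType_pair (g : G) : IsProdOneType G [orderOf g, orderOf g] :=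
  ⟨[g, g⁻¹], .cons rfl (.cons (orderOf_inv g) .nil), by simp⟩

end Lists

section GenVector

variable {G : Type} [Group G] {h : ℕ} {P Q : List ℕ}

theorem genVector_iff_exists_list :
    GenVector G h P ↔ ∃ (α β : Fin h → G) (L : List G), HasOrders L P ∧
      (List.ofFn fun i => ⁅α i, β i⁆).prod * L.prod = 1 ∧
      Subgroup.closure (Set.range α ∪ Set.range β ∪ {g | g ∈ L}) = ⊤ := by
  constructor
  · rintro ⟨α, β, c, hc, hprod, hgen⟩
    refine ⟨α, β, List.ofFn c, ?_, hprod, by rwa [setOf_mem_ofFn]⟩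
    exact List.forall₂_iff_get.mpr ⟨by simp, fun i h₁ _ => by simpa using hc ⟨i, by simpa using h₁⟩⟩
  · rintro ⟨α, β, L, hL, hprod, hgen⟩
    have hlen : P.length = L.length := hL.length_eq.symm
    have hofFn : List.ofFn (fun j : Fin P.length => L.get (Fin.cast hlen j)) = L :=
      List.ext_get (by simp [hlen]) (fun i _ _ => by simp)
    refine ⟨α, β, fun j => L.get (Fin.cast hlen j), fun j => ?_, by rwa [hofFn], ?_⟩
    · exact (List.forall₂_iff_get.mp hL).2 j (by simp [← hlen]) j.isLt
    · rwa [← hofFn, setOf_mem_ofFn] at hgen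

theorem genVector_zero_of_list (L : List G) (hL : HasOrders L P) (hprod : L.prod = 1)
    (hgen : Subgroup.closure {g | g ∈ L} = ⊤) : GenVector G 0 P :=
  genVector_iff_exists_list.mpr ⟨Fin.elim0, Fin.elim0, L, hL, by simpa using hprod,
    by simpa [Set.range_eq_empty] using hgen⟩

theorem GenVector.perm (hv : GenVector G h P) (hPQ : P.Perm Q) : GenVector G h Q := by
  obtain ⟨α, β, L, hL, hprod, hgen⟩ := genVector_iff_exists_list.mp hv
  obtain ⟨L', hL', hprod', hcl⟩ := hL.exists_perm hPQ
  refine genVector_iff_exists_list.mpr ⟨α, β, L', hL', by rwa [hprod'], ?_⟩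
  rwa [Subgroup.closure_union, hcl, ← Subgroup.closure_union]

theorem GenVector.append (hv : GenVector G h P) (hQ : IsProdOneType G Q) :
    GenVector G h (P ++ Q) := by
  obtain ⟨α, β, L, hL, hprod, hgen⟩ := genVector_iff_exists_list.mp hv
  obtain ⟨M, hM, hMprod⟩ := hQ
  refine genVector_iff_exists_list.mpr ⟨α, β, L ++ M, List.rel_append hL hM,
    by simp [hprod, hMprod], top_unique (hgen ▸ Subgroup.closure_mono ?_)⟩
  intro g
  simp only [List.mem_append, Set.mem_union, Set.mem_ofPred_eq]
  tauto

end GenVector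

section Signatures

def periods (a : Fin 4 → ℕ) : List ℕ :=
  periods7 (a 0) (a 1) (a 2) (a 3)

/-- By Riemann–Hurwitz for a group of order `168`, the genus of `(0; periods a)` is
`weight a - 167`. -/
def weight (a : Fin 4 → ℕ) : ℕ :=
  42 * a 0 + 56 * a 1 + 63 * a 2 + 72 * a 3

theorem weight_add (a b : Fin 4 → ℕ) : weight (a + b) = weight a + weight b := by
  simp only [weight, Pi.add_apply]
  ring

theorem weight_smul (k : ℕ) (a : Fin 4 → ℕ) : weight (k • a) = k * weight a := by
  simp only [weight, Pi.smul_apply, smul_eq_mul]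
  ring

theorem periods_append_perm (a b : Fin 4 → ℕ) :
    (periods a ++ periods b).Perm (periods (a + b)) := by
  rw [List.perm_iff_count]
  intro n
  simp only [periods, periods7, List.count_append, List.count_replicate, Pi.add_apply]
  split_ifs <;> omega

variable {G : Type} [Group G]

theorem GenVector.add {h : ℕ} {a b : Fin 4 → ℕ} (ha : GenVector G h (periods a))
    (hb : IsProdOneType G (periods b)) : GenVector G h (periods (a + b)) :=
  (ha.append hb).perm (periods_append_perm a b)

theorem IsProdOneType.add {a b : Fin 4 → ℕ} (ha : IsProdOneType G (periods a))
    (hb : IsProdOneType G (periods b)) : IsProdOneType G (periods (a + b)) :=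
  (ha.append hb).perm (periods_append_perm a b)

theorem IsProdOneType.nsmul {a : Fin 4 → ℕ} (ha : IsProdOneType G (periods a)) (k : ℕ) :
    IsProdOneType G (periods (k • a)) := by
  induction k with
  | zero => rw [zero_smul]; exact ⟨[], .nil, rfl⟩
  | succ k ih => rw [succ_nsmul]; exact ih.add ha

theorem isProdOneType_two_smul {g₂ g₃ g₄ g₇ : G} (h₂ : orderOf g₂ = 2) (h₃ : orderOf g₃ = 3)
    (h₄ : orderOf g₄ = 4) (h₇ : orderOf g₇ = 7) (c : Fin 4 → ℕ) :
    IsProdOneType G (periods (2 • c)) := by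
  have hc : 2 • c = c 0 • ![2, 0, 0, 0] + c 1 • ![0, 2, 0, 0] + c 2 • ![0, 0, 2, 0] +
      c 3 • ![0, 0, 0, 2] := by
    ext i; fin_cases i <;> simp [mul_comm]
  rw [hc]
  refine (((IsProdOneType.nsmul ?_ _).add (.nsmul ?_ _)).add (.nsmul ?_ _)).add (.nsmul ?_ _)
  · simpa [periods, periods7, h₂] using isProdOneType_pair g₂
  · simpa [periods, periods7, h₃] using isProdOneType_pair g₃
  · simpa [periods, periods7, h₄] using isProdOneType_pair g₄
  · simpa [periods, periods7, h₇] using isProdOneType_pair g₇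

def IsPairWeight (m : ℕ) : Prop :=
  ∃ c : Fin 4 → ℕ, weight (2 • c) = m

/-- The residues of `m` modulo `3`, `4` and `7` fix the numbers of pairs of `3`s, `4`s and `7`s
modulo `3`, `2` and `7`; the least choices must fit below `m`, and pairs of `2`s fill the rest. -/
theorem isPairWeight_iff (m : ℕ) : IsPairWeight m ↔
    m % 2 = 0 ∧ 112 * (m % 3) + 126 * (m / 2 % 2) + 144 * (2 * m % 7) ≤ m := by
  constructor
  · rintro ⟨c, hc⟩
    simp only [weight, Pi.smul_apply, smul_eq_mul] at hc
    have h₃ : m % 3 = c 1 % 3 := by omega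
    have h₄ : m / 2 % 2 = c 2 % 2 := by omega
    have h₇ : 2 * m % 7 = c 3 % 7 := by omega
    have := Nat.mod_le (c 1) 3
    have := Nat.mod_le (c 2) 2
    have := Nat.mod_le (c 3) 7
    omega
  · rintro ⟨h2, hle⟩
    refine ⟨![(m - 112 * (m % 3) - 126 * (m / 2 % 2) - 144 * (2 * m % 7)) / 84, m % 3,
      m / 2 % 2, 2 * m % 7], ?_⟩
    simp only [weight, Pi.smul_apply, smul_eq_mul, Matrix.cons_val]
    omega

instance : DecidablePred IsPairWeight :=
  fun m => decidable_of_iff _ (isPairWeight_iff m).symm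

end Signatures

section Finite

variable {G : Type*} [Group G]

instance [Finite G] [DecidableEq G] (g : G) (n : ℕ) : Decidable (orderOf g = n) :=
  decidable_of_iff (0 < n ∧ g ^ n = 1 ∧ ∀ m < n, 0 < m → g ^ m ≠ 1)
    ⟨fun ⟨hn, h⟩ => (orderOf_eq_iff hn).mpr h,
      fun h => ⟨h ▸ orderOf_pos g, (orderOf_eq_iff (h ▸ orderOf_pos g)).mp h⟩⟩

theorem IsSimpleGroup.eq_top_of_card_dvd_two_mul [Finite G] [IsSimpleGroup G] {H : Subgroup G}
    (hH : H ≠ ⊥) (hcard : Nat.card G ∣ 2 * Nat.card H) : H = ⊤ := by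
  have hindex : H.index ∣ 2 := by
    rw [← H.index_mul_card] at hcard
    exact Nat.dvd_of_mul_dvd_mul_right Nat.card_pos hcard
  rcases (Nat.dvd_prime Nat.prime_two).mp hindex with h1 | h2
  · exact Subgroup.index_eq_one.mp h1
  · exact (eq_bot_or_eq_top_of_normal H (Subgroup.normal_of_index_eq_two h2)).resolve_left hH

end Finite

section PSL27

instance : Fact (Nat.Prime 7) := ⟨by norm_num⟩

instance : DecidableEq PSL(2, ZMod 7) := fun x y =>
  Quotient.recOnSubsingleton₂ x y fun a b =>
    decidable_of_iff
      (∃ r : ZMod 7, r ^ Fintype.card (Fin 2) = 1 ∧ Matrix.scalar (Fin 2) r = ↑(a⁻¹ * b))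
      (Matrix.SpecialLinearGroup.mem_center_iff.symm.trans QuotientGroup.eq.symm)

instance : IsSimpleGroup PSL(2, ZMod 7) :=
  Matrix.ProjectiveSpecialLinearGroup.rank_two_simple (by simp)

abbrev psl7 (M : Matrix (Fin 2) (Fin 2) (ZMod 7)) (hM : M.det = 1 := by decide) :
    PSL(2, ZMod 7) :=
  QuotientGroup.mk ⟨M, hM⟩

theorem card_center_SL : Nat.card (Subgroup.center SL(2, ZMod 7)) = 2 := by
  rw [Nat.card_congr (Matrix.SpecialLinearGroup.center_equiv_rootsOfUnity' 0).toEquiv,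
    Fintype.card_fin, (IsPrimitiveRoot.neg_one 7 (by norm_num)).card_rootsOfUnity]

set_option maxRecDepth 10000 in
theorem card_PSL : Nat.card PSL(2, ZMod 7) = 168 := by
  have hSL : Nat.card SL(2, ZMod 7) = 336 := by
    rw [Nat.card_eq_fintype_card]; decide
  have h := Subgroup.card_eq_card_quotient_mul_card_subgroup (Subgroup.center SL(2, ZMod 7))
  rw [card_center_SL, hSL] at h
  change Nat.card (SL(2, ZMod 7) ⧸ Subgroup.center SL(2, ZMod 7)) = 168
  omega

theorem eq_top_of_orderOf_mem {H : Subgroup PSL(2, ZMod 7)} {x y z : PSL(2, ZMod 7)}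
    (hx : x ∈ H) (hy : y ∈ H) (hz : z ∈ H)
    (ox : orderOf x = 3) (oy : orderOf y = 4) (oz : orderOf z = 7) : H = ⊤ := by
  have h84 : 84 ∣ Nat.card H := by
    have d3 := ox ▸ Subgroup.orderOf_dvd_natCard H hx
    have d4 := oy ▸ Subgroup.orderOf_dvd_natCard H hy
    have d7 := oz ▸ Subgroup.orderOf_dvd_natCard H hz
    exact Nat.Coprime.mul_dvd_of_dvd_of_dvd (by norm_num)
      (Nat.Coprime.mul_dvd_of_dvd_of_dvd (by norm_num) d3 d4) d7
  refine IsSimpleGroup.eq_top_of_card_dvd_two_mul ?_ (card_PSL ▸ mul_dvd_mul_left 2 h84)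
  rintro rfl
  simp only [Subgroup.mem_bot] at hx
  simp [hx] at ox

theorem genVector_zero_of_words {P : List ℕ} (L u v w : List PSL(2, ZMod 7))
    (hL : HasOrders L P ∧ L.prod = 1)
    (hwords : u ⊆ L ∧ v ⊆ L ∧ w ⊆ L ∧
      orderOf u.prod = 3 ∧ orderOf v.prod = 4 ∧ orderOf w.prod = 7) :
    GenVector PSL(2, ZMod 7) 0 P := by
  obtain ⟨hu, hv, hw, ou, ov, ow⟩ := hwords
  have hmem {x : List PSL(2, ZMod 7)} (hx : x ⊆ L) : x.prod ∈ Subgroup.closure {g | g ∈ L} :=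
    Subgroup.list_prod_mem _ fun g hg => Subgroup.subset_closure (hx hg)
  exact genVector_zero_of_list L hL.1 hL.2
    (eq_top_of_orderOf_mem (hmem hu) (hmem hv) (hmem hw) ou ov ow)

theorem genVector_3_7_7 : GenVector PSL(2, ZMod 7) 0 (periods ![0, 1, 0, 2]) :=
  let a := psl7 !![0, 1; -1, 1]
  let b := psl7 !![1, 0; 1, 1]
  let c := psl7 !![1, -1; 0, 1]
  genVector_zero_of_words [a, b, c] [a] [a, b, b] [b] (by decide) (by decide)

theorem genVector_4_7_7 : GenVector PSL(2, ZMod 7) 0 (periods ![0, 0, 1, 2]) :=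
  let a := psl7 !![1, 1; 1, 2]
  let b := psl7 !![1, -1; 0, 1]
  let c := psl7 !![1, 0; -1, 1]
  genVector_zero_of_words [a, b, c] [a, b, b] [a] [b] (by decide) (by decide)

theorem genVector_3_4_7 : GenVector PSL(2, ZMod 7) 0 (periods ![0, 1, 1, 1]) :=
  let a := psl7 !![0, 1; -1, 1]
  let b := psl7 !![1, 1; 1, 2]
  let c := psl7 !![1, -2; 0, 1]
  genVector_zero_of_words [a, b, c] [a] [b] [c] (by decide) (by decide)

theorem genVector_7_7_7 : GenVector PSL(2, ZMod 7) 0 (periods ![0, 0, 0, 3]) :=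
  let a := psl7 !![1, 1; 0, 1]
  let b := psl7 !![1, 0; 3, 1]
  let c := psl7 !![1, -1; -3, -3]
  genVector_zero_of_words [a, b, c] [a, a, b] [a, c, b] [a] (by decide) (by decide)

theorem genVector_2_2_3_3 : GenVector PSL(2, ZMod 7) 0 (periods ![2, 2, 0, 0]) :=
  let s := psl7 !![0, 1; -1, 0]
  let u := psl7 !![0, 1; -1, 1]
  genVector_zero_of_words [s, s, u, u⁻¹] [u] [s, u, s, u⁻¹] [s, u] (by decide) (by decide)

theorem isProdOneType_2_3_4 : IsProdOneType PSL(2, ZMod 7) (periods ![1, 1, 1, 0]) :=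
  ⟨[psl7 !![1, 1; -2, -1], psl7 !![0, 1; -1, 1], psl7 !![3, 2; 1, 1]], by decide, by decide⟩

theorem isProdOneType_2_7_7_7 : IsProdOneType PSL(2, ZMod 7) (periods ![1, 0, 0, 3]) :=
  ⟨[psl7 !![0, 1; -1, 0], psl7 !![1, 0; 1, 1], psl7 !![1, -1; 0, 1], psl7 !![1, 0; 1, 1]],
    by decide, by decide⟩

def bases : List (Fin 4 → ℕ) :=
  [![0, 1, 0, 2], ![0, 0, 1, 2], ![0, 1, 1, 1], ![0, 0, 0, 3], ![2, 2, 0, 0]]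

theorem genVector_of_mem_bases {b : Fin 4 → ℕ} (hb : b ∈ bases) (e f : ℕ) (c : Fin 4 → ℕ) :
    GenVector PSL(2, ZMod 7) 0 (periods (b + e • ![1, 1, 1, 0] + f • ![1, 0, 0, 3] + 2 • c)) := by
  have hbase : GenVector PSL(2, ZMod 7) 0 (periods b) := by
    simp only [bases, List.mem_cons, List.not_mem_nil, or_false] at hb
    rcases hb with rfl | rfl | rfl | rfl | rfl
    exacts [genVector_3_7_7, genVector_4_7_7, genVector_3_4_7, genVector_7_7_7, genVector_2_2_3_3]
  refine ((hbase.add (isProdOneType_2_3_4.nsmul e)).add (isProdOneType_2_7_7_7.nsmul f)).add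
    (isProdOneType_two_smul (g₂ := psl7 !![0, 1; -1, 0]) (g₃ := psl7 !![0, 1; -1, 1])
      (g₄ := psl7 !![1, 1; 1, 2]) (g₇ := psl7 !![1, 1; 0, 1]) ?_ ?_ ?_ ?_ c) <;> decide

theorem exists_weight_eq {n : ℕ} (hn : 566 ≤ n) : ∃ b ∈ bases, ∃ (e f : ℕ) (c : Fin 4 → ℕ),
    weight (b + e • ![1, 1, 1, 0] + f • ![1, 0, 0, 3] + 2 • c) = n := by
  have hperiod : ∀ r < 84, ∃ b ∈ bases, ∃ e < 2, ∃ f < 2,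
      weight (b + e • ![1, 1, 1, 0] + f • ![1, 0, 0, 3]) ≤ 566 + r ∧
      IsPairWeight (566 + r - weight (b + e • ![1, 1, 1, 0] + f • ![1, 0, 0, 3])) := by
    decide
  obtain ⟨b, hb, e, -, f, -, hle, c, hc⟩ := hperiod ((n - 566) % 84) (Nat.mod_lt _ (by norm_num))
  refine ⟨b, hb, e, f, c + ![(n - 566) / 84, 0, 0, 0], ?_⟩
  have hq : weight ![(n - 566) / 84, 0, 0, 0] = 42 * ((n - 566) / 84) := by simp [weight]
  rw [weight_smul] at hc
  rw [weight_add _ (2 • _), weight_smul, weight_add c, hq]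
  omega

end PSL27

/-- The stable upper genus of `PSL(2, F7)` is `399`: no signature realizes genus `398`,
while every genus `g >= 399` is realized by a generating vector of `PSL(2, F7)`. -/
theorem stable_upper_genus_PSL2_F7 :
    (¬ ∃ h a₂ a₃ a₄ a₇ : ℕ,
        (398 : ℤ) = 1 + 168 * ((h : ℤ) - 1) + 42 * a₂ + 56 * a₃ + 63 * a₄ + 72 * a₇) ∧
    (∀ g : ℤ, 399 ≤ g → ∃ h a₂ a₃ a₄ a₇ : ℕ,
        (h, a₂, a₃, a₄, a₇) ≠ (1, 1, 0, 0, 0) ∧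
        g = 1 + 168 * ((h : ℤ) - 1) + 42 * a₂ + 56 * a₃ + 63 * a₄ + 72 * a₇ ∧
        GenVector (Matrix.ProjectiveSpecialLinearGroup (Fin 2) (ZMod 7)) h
          (periods7 a₂ a₃ a₄ a₇)) := by
  refine ⟨?_, fun g hg => ?_⟩
  · -- modulo `3`, `7` and `2` the equation forces `a₃ ≥ 2`, `a₇ ≥ 6`, `a₄ ≥ 1`, exceeding `565`
    rintro ⟨h, a₂, a₃, a₄, a₇, hgenus⟩
    omega
  · obtain ⟨b, hb, e, f, c, hw⟩ := exists_weight_eq (n := g.toNat + 167) (by omega)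
    set a := b + e • ![1, 1, 1, 0] + f • ![1, 0, 0, 3] + 2 • c
    refine ⟨0, a 0, a 1, a 2, a 3, by simp, ?_, genVector_of_mem_bases hb e f c⟩
    simp only [weight] at hw
    omega
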